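/- arXiv:2602.24221 — 2 statements merged into one kernel-verified Lean document; each statement's English description precedes it below -/
import Mathlib

section
/- The linearized CLT RG operator D𝓡[ψ](x) = 2√2 ∫ φ*(√2 x − u) ψ(u) du, with φ* the standard Gaussian density, maps the function ψ_k(x) = He_k(x) φ*(x) (Hermite polynomial times Gaussian) to ρ_k ψ_k with eigenvalue ρ_k = 2^{1−k/2}, for k = 0, 1, 2, 3. -/
open Real Polynomial

/-- The standard Gaussian density. -/
noncomputable def stdGaussian (x : ℝ) : ℝ :=
  (Real.sqrt (2 * Real.pi))⁻¹ * Real.exp (-x ^ 2 / 2)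

/-- The linearized CLT RG operator at the Gaussian fixed point. -/
noncomputable def linCltRG (ψ : ℝ → ℝ) (x : ℝ) : ℝ :=
  2 * Real.sqrt 2 * ∫ u : ℝ, stdGaussian (Real.sqrt 2 * x - u) * ψ u

/-- Hermite-times-Gaussian eigenfunction. -/
noncomputable def hermiteGaussian (k : ℕ) (x : ℝ) : ℝ :=
  (Polynomial.aeval x (Polynomial.hermite k)) * stdGaussian x

open MeasureTheory

namespace CltRGAux

lemma intg (n : ℕ) : Integrable (fun u : ℝ => u ^ n * Real.exp (-u ^ 2)) := by
  have := integrable_rpow_mul_exp_neg_mul_sq (b := 1) one_pos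
    (s := (n : ℝ)) (by exact_mod_cast neg_one_lt_zero.trans_le (Nat.cast_nonneg n))
  simpa [Real.rpow_natCast] using this

lemma intg' (c : ℝ) (n : ℕ) : Integrable (fun u : ℝ => c * (u ^ n * Real.exp (-u ^ 2))) :=
  (intg n).const_mul c

lemma split (a b c d : ℝ) :
    ∫ u : ℝ, (a + b * u + c * u ^ 2 + d * u ^ 3) * Real.exp (-u ^ 2)
      = a * (∫ u : ℝ, Real.exp (-u ^ 2)) + b * (∫ u : ℝ, u * Real.exp (-u ^ 2))
        + c * (∫ u : ℝ, u ^ 2 * Real.exp (-u ^ 2))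
        + d * (∫ u : ℝ, u ^ 3 * Real.exp (-u ^ 2)) := by
  rw [show (fun u : ℝ => (a + b * u + c * u ^ 2 + d * u ^ 3) * Real.exp (-u ^ 2))
      = fun u : ℝ => (a * (u ^ 0 * Real.exp (-u ^ 2)) + b * (u ^ 1 * Real.exp (-u ^ 2)))
        + (c * (u ^ 2 * Real.exp (-u ^ 2)) + d * (u ^ 3 * Real.exp (-u ^ 2)))
      from funext fun u => by ring]
  have hab : Integrable (fun u : ℝ => a * (u ^ 0 * Real.exp (-u ^ 2))
      + b * (u ^ 1 * Real.exp (-u ^ 2))) := (intg' a 0).add (intg' b 1)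
  have hcd : Integrable (fun u : ℝ => c * (u ^ 2 * Real.exp (-u ^ 2))
      + d * (u ^ 3 * Real.exp (-u ^ 2))) := (intg' c 2).add (intg' d 3)
  rw [integral_add hab hcd, integral_add (intg' a 0) (intg' b 1),
    integral_add (intg' c 2) (intg' d 3),
    integral_const_mul, integral_const_mul, integral_const_mul, integral_const_mul]
  simp [pow_one]
  ring

lemma deriv_aux (n : ℕ) (x : ℝ) :
    HasDerivAt (fun y : ℝ => y ^ n * Real.exp (-y ^ 2))
      (n * x ^ (n - 1) * Real.exp (-x ^ 2) + x ^ n * (Real.exp (-x ^ 2) * (-(2 * x)))) x := by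
  have h1 : HasDerivAt (fun y : ℝ => -y ^ 2) (-(2 * x)) x := by
    simpa using (hasDerivAt_pow 2 x).fun_neg
  exact (hasDerivAt_pow n x).mul h1.exp

lemma M0 : ∫ u : ℝ, Real.exp (-u ^ 2) = Real.sqrt π := by
  simpa using integral_gaussian 1

lemma M1 : ∫ u : ℝ, u * Real.exp (-u ^ 2) = 0 := by
  have h : ∀ x : ℝ, HasDerivAt (fun y : ℝ => -(1/2) * (y ^ 0 * Real.exp (-y ^ 2)))
      (x * Real.exp (-x ^ 2)) x := by
    intro x
    have := (deriv_aux 0 x).const_mul (-(1/2) : ℝ)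
    refine this.congr_deriv ?_
    push_cast; ring
  have := integral_eq_zero_of_hasDerivAt_of_integrable h (by simpa using intg 1)
    (intg' (-(1/2)) 0)
  simpa using this

lemma M2 : ∫ u : ℝ, u ^ 2 * Real.exp (-u ^ 2) = Real.sqrt π / 2 := by
  have h : ∀ x : ℝ, HasDerivAt (fun y : ℝ => -(1/2) * (y ^ 1 * Real.exp (-y ^ 2)))
      (x ^ 2 * Real.exp (-x ^ 2) - (1/2) * Real.exp (-x ^ 2)) x := by
    intro x
    have := (deriv_aux 1 x).const_mul (-(1/2) : ℝ)
    refine this.congr_deriv ?_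
    push_cast; ring
  have hint : Integrable (fun x : ℝ => x ^ 2 * Real.exp (-x ^ 2)
      - (1/2) * Real.exp (-x ^ 2)) := by
    have := (intg 2).sub (intg' (1/2) 0)
    simpa [Pi.sub_def] using this
  have h0 := integral_eq_zero_of_hasDerivAt_of_integrable h hint (intg' (-(1/2)) 1)
  have h1 : Integrable (fun x : ℝ => (1/2 : ℝ) * Real.exp (-x ^ 2)) := by
    simpa using intg' (1/2) 0
  rw [integral_sub (intg 2) h1, integral_const_mul, M0, sub_eq_zero] at h0
  rw [h0]; ring

lemma M3 : ∫ u : ℝ, u ^ 3 * Real.exp (-u ^ 2) = 0 := by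
  have h : ∀ x : ℝ, HasDerivAt (fun y : ℝ => -(1/2) * (y ^ 2 * Real.exp (-y ^ 2)))
      (x ^ 3 * Real.exp (-x ^ 2) - x * Real.exp (-x ^ 2)) x := by
    intro x
    have := (deriv_aux 2 x).const_mul (-(1/2) : ℝ)
    refine this.congr_deriv ?_
    push_cast; ring
  have hint : Integrable (fun x : ℝ => x ^ 3 * Real.exp (-x ^ 2) - x * Real.exp (-x ^ 2)) := by
    have := (intg 3).sub (intg 1)
    simpa [Pi.sub_def] using this
  have h0 := integral_eq_zero_of_hasDerivAt_of_integrable h hint (intg' (-(1/2)) 2)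
  have h1 : Integrable (fun x : ℝ => x * Real.exp (-x ^ 2)) := by simpa using intg 1
  rw [integral_sub (intg 3) h1, M1, sub_eq_zero] at h0
  simpa using h0

lemma master (a b c d : ℝ) :
    ∫ u : ℝ, (a + b * u + c * u ^ 2 + d * u ^ 3) * Real.exp (-u ^ 2)
      = (a + c / 2) * Real.sqrt π := by
  rw [split, M0, M1, M2, M3]; ring

lemma conv_pt (x u : ℝ) : stdGaussian (Real.sqrt 2 * x - u) * stdGaussian u
    = (2 * π)⁻¹ * Real.exp (-x ^ 2 / 2) * Real.exp (-(u - x / Real.sqrt 2) ^ 2) := by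
  unfold stdGaussian
  have hs : Real.sqrt 2 ^ 2 = 2 := Real.sq_sqrt (by norm_num)
  have hs0 : Real.sqrt 2 ≠ 0 := by positivity
  have h1 : (Real.sqrt (2 * π))⁻¹ * Real.exp (-(Real.sqrt 2 * x - u) ^ 2 / 2) *
      ((Real.sqrt (2 * π))⁻¹ * Real.exp (-u ^ 2 / 2))
      = ((Real.sqrt (2 * π))⁻¹ * (Real.sqrt (2 * π))⁻¹) *
        (Real.exp (-(Real.sqrt 2 * x - u) ^ 2 / 2) * Real.exp (-u ^ 2 / 2)) := by ring
  rw [h1, ← mul_inv, Real.mul_self_sqrt (by positivity), ← Real.exp_add]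
  rw [mul_assoc, ← Real.exp_add]
  congr 1
  rw [Real.exp_eq_exp]
  field_simp
  linear_combination (2 * Real.sqrt 2 * x * u - x ^ 2 * (Real.sqrt 2 ^ 2 + 1)) * hs

lemma key_step (K : ℕ) (x : ℝ) (P : ℝ → ℝ) (a b c d : ℝ)
    (hP : ∀ y : ℝ, (Polynomial.aeval y (Polynomial.hermite K)) = P y)
    (hPc : ∀ v : ℝ, P (v + x / Real.sqrt 2)
      = a + b * v + c * v ^ 2 + d * v ^ 3) :
    linCltRG (hermiteGaussian K) x
      = 2 * Real.sqrt 2 * ((2 * π)⁻¹ * Real.exp (-x ^ 2 / 2) * ((a + c / 2) * Real.sqrt π)) := by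
  rw [linCltRG, ← integral_add_right_eq_self
    (fun u => stdGaussian (Real.sqrt 2 * x - u) * hermiteGaussian K u) (x / Real.sqrt 2)]
  have key : ∀ v : ℝ,
      stdGaussian (Real.sqrt 2 * x - (v + x / Real.sqrt 2))
          * hermiteGaussian K (v + x / Real.sqrt 2)
      = (2 * π)⁻¹ * Real.exp (-x ^ 2 / 2) *
        ((a + b * v + c * v ^ 2 + d * v ^ 3) * Real.exp (-v ^ 2)) := by
    intro v
    rw [hermiteGaussian, hP, ← mul_assoc,
      mul_comm (stdGaussian (Real.sqrt 2 * x - (v + x / Real.sqrt 2))),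
      mul_assoc, conv_pt, hPc]
    have : v + x / Real.sqrt 2 - x / Real.sqrt 2 = v := by ring
    rw [this]
    ring
  simp only [key]
  rw [integral_const_mul, master]

end CltRGAux

theorem linearized_cltRG_eigen (k : ℕ) (hk : k ≤ 3) (x : ℝ) :
    linCltRG (hermiteGaussian k) x =
      (2 : ℝ) ^ (1 - (k : ℝ) / 2) * hermiteGaussian k x := by
  have hs : Real.sqrt 2 ^ 2 = 2 := Real.sq_sqrt (by norm_num)
  have hs0 : Real.sqrt 2 ≠ 0 := by positivity
  have hp : Real.sqrt π ^ 2 = π := Real.sq_sqrt pi_pos.le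
  have hp0 : Real.sqrt π ≠ 0 := by positivity
  have h2pi : Real.sqrt (2 * π) = Real.sqrt 2 * Real.sqrt π :=
    Real.sqrt_mul (by norm_num) π
  interval_cases k
  · -- k = 0
    rw [CltRGAux.key_step 0 x (fun _ => 1) 1 0 0 0
      (fun y => by simp [Polynomial.hermite_zero]) (fun v => by ring)]
    rw [show (1 - ((0:ℕ) : ℝ) / 2) = (1 : ℝ) by norm_num, Real.rpow_one]
    rw [hermiteGaussian, stdGaussian, h2pi]
    simp [Polynomial.hermite_zero]
    field_simp
    ring_nf
    linear_combination (Real.sqrt π ^ 2) * hs + 2 * hp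
  · -- k = 1
    rw [CltRGAux.key_step 1 x (fun y => y) (x / Real.sqrt 2) 1 0 0
      (fun y => by simp [Polynomial.hermite_one]) (fun v => by ring)]
    rw [show (1 - ((1:ℕ) : ℝ) / 2) = (1/2 : ℝ) by norm_num, ← Real.sqrt_eq_rpow]
    rw [hermiteGaussian, stdGaussian, h2pi]
    simp [Polynomial.hermite_one]
    field_simp
    ring_nf
    linear_combination x * hp
  · -- k = 2
    rw [CltRGAux.key_step 2 x (fun y => y ^ 2 - 1)
      ((x / Real.sqrt 2) ^ 2 - 1) (2 * (x / Real.sqrt 2)) 1 0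
      (fun y => by
        simp [show (2:ℕ) = 1 + 1 from rfl, Polynomial.hermite_succ, Polynomial.hermite_one]
        ring)
      (fun v => by ring)]
    rw [show (1 - ((2:ℕ) : ℝ) / 2) = (0 : ℝ) by norm_num, Real.rpow_zero]
    rw [hermiteGaussian, stdGaussian, h2pi]
    rw [show (Polynomial.aeval x (Polynomial.hermite 2)) = x ^ 2 - 1 by
      simp [show (2:ℕ) = 1 + 1 from rfl, Polynomial.hermite_succ, Polynomial.hermite_one]
      ring]
    field_simp
    ring_nf
    linear_combination (-Real.sqrt π ^ 2) * hs
      + (2 * x ^ 2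
      - 2) * hp
  · -- k = 3
    rw [CltRGAux.key_step 3 x (fun y => y ^ 3 - 3 * y)
      ((x / Real.sqrt 2) ^ 3 - 3 * (x / Real.sqrt 2))
      (3 * (x / Real.sqrt 2) ^ 2 - 3) (3 * (x / Real.sqrt 2)) 1
      (fun y => by
        simp [show (3:ℕ) = 2 + 1 from rfl, show (2:ℕ) = 1 + 1 from rfl,
          Polynomial.hermite_succ, Polynomial.hermite_one]
        ring)
      (fun v => by ring)]
    rw [show (1 - ((3:ℕ) : ℝ) / 2) = (-(1/2) : ℝ) by norm_num,
      Real.rpow_neg (by norm_num : (0:ℝ) ≤ 2), ← Real.sqrt_eq_rpow]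
    rw [hermiteGaussian, stdGaussian, h2pi]
    rw [show (Polynomial.aeval x (Polynomial.hermite 3)) = x ^ 3 - 3 * x by
      simp [show (3:ℕ) = 2 + 1 from rfl, show (2:ℕ) = 1 + 1 from rfl,
        Polynomial.hermite_succ, Polynomial.hermite_one]
      ring]
    field_simp
    ring_nf
    linear_combination (-3 * x * Real.sqrt π ^ 2) * hs + (2 * x ^ 3 - 6 * x) * hp
end

section
/- The Gaussian density with variance σ² = (2−c)/(2cβ) is a fixed point of the hierarchical-model RG operator: there exists a normalization constant z > 0 such that z e^{βx²} ∫_ℝ φ*((2x/√c) − u) φ*(u) du = φ*(x) for all x, where φ*(x) = (2πσ²)^{-1/2} e^{-x²/(2σ²)}. -/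
open Real MeasureTheory

theorem hierarchical_gaussian_fixed_point (β c : ℝ) (hβ : 0 < β) (hc : 1 < c) (hc2 : c < 2) :
    ∃ z : ℝ, 0 < z ∧
      ∀ x : ℝ,
        z * Real.exp (β * x ^ 2) *
          ∫ u : ℝ,
            (Real.sqrt (2 * Real.pi * ((2 - c) / (2 * c * β))))⁻¹ *
              Real.exp (-(2 * x / Real.sqrt c - u) ^ 2 / (2 * ((2 - c) / (2 * c * β)))) *
            ((Real.sqrt (2 * Real.pi * ((2 - c) / (2 * c * β))))⁻¹ *
              Real.exp (-u ^ 2 / (2 * ((2 - c) / (2 * c * β))))) =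
        (Real.sqrt (2 * Real.pi * ((2 - c) / (2 * c * β))))⁻¹ *
          Real.exp (-x ^ 2 / (2 * ((2 - c) / (2 * c * β)))) := by
  set s : ℝ := (2 - c) / (2 * c * β) with hs_def
  have hs : 0 < s := div_pos (by linarith) (by positivity)
  have hπ := Real.pi_pos
  refine ⟨Real.sqrt 2, Real.sqrt_pos.mpr (by norm_num), fun x => ?_⟩
  set y : ℝ := 2 * x / Real.sqrt c with hy_def
  set A : ℝ := (Real.sqrt (2 * Real.pi * s))⁻¹ with hA_def
  have hA : 0 < A := by
    rw [hA_def]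
    exact inv_pos.mpr (Real.sqrt_pos.mpr (by positivity))
  have hint : (∫ u : ℝ, A * Real.exp (-(y - u) ^ 2 / (2 * s)) *
      (A * Real.exp (-u ^ 2 / (2 * s))))
      = A ^ 2 * (Real.exp (-y ^ 2 / (4 * s)) * Real.sqrt (Real.pi * s)) := by
    have h1 : ∀ u : ℝ, A * Real.exp (-(y - u) ^ 2 / (2 * s)) *
        (A * Real.exp (-u ^ 2 / (2 * s)))
        = A ^ 2 * (Real.exp (-y ^ 2 / (4 * s)) *
            Real.exp (-(1 / s) * (u - y / 2) ^ 2)) := by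
      intro u
      rw [mul_mul_mul_comm, ← sq, ← Real.exp_add, ← Real.exp_add]
      congr 1
      field_simp
      ring
    simp_rw [h1]
    rw [integral_const_mul, integral_const_mul]
    congr 1
    have h2 : (∫ u : ℝ, Real.exp (-(1 / s) * (u - y / 2) ^ 2))
        = ∫ u : ℝ, Real.exp (-(1 / s) * u ^ 2) :=
      integral_sub_right_eq_self (fun u => Real.exp (-(1 / s) * u ^ 2)) (y / 2)
    rw [h2, integral_gaussian]
    congr 1
    field_simp
  rw [hint]
  have hy2 : y ^ 2 = 4 * x ^ 2 / c := by
    rw [hy_def, div_pow, Real.sq_sqrt (by linarith : (0:ℝ) ≤ c)]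
    ring
  have hexp : Real.exp (β * x ^ 2) * Real.exp (-y ^ 2 / (4 * s))
      = Real.exp (-x ^ 2 / (2 * s)) := by
    rw [← Real.exp_add]
    congr 1
    rw [hy2, hs_def]
    have hc0 : c ≠ 0 := by positivity
    have h2c : (2 : ℝ) - c ≠ 0 := by linarith
    field_simp
    ring
  have hconst : Real.sqrt 2 * A ^ 2 * Real.sqrt (Real.pi * s) = A := by
    have h1 : Real.sqrt 2 * Real.sqrt (Real.pi * s) = Real.sqrt (2 * Real.pi * s) := by
      rw [← Real.sqrt_mul (by norm_num : (0:ℝ) ≤ 2), mul_assoc]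
    have h2 : Real.sqrt (2 * Real.pi * s) = A⁻¹ := by
      rw [hA_def, inv_inv]
    have h3 : A ^ 2 * A⁻¹ = A := by
      field_simp
    calc Real.sqrt 2 * A ^ 2 * Real.sqrt (Real.pi * s)
        = A ^ 2 * (Real.sqrt 2 * Real.sqrt (Real.pi * s)) := by ring
      _ = A ^ 2 * A⁻¹ := by rw [h1, h2]
      _ = A := h3
  calc Real.sqrt 2 * Real.exp (β * x ^ 2) *
        (A ^ 2 * (Real.exp (-y ^ 2 / (4 * s)) * Real.sqrt (Real.pi * s)))
      = (Real.sqrt 2 * A ^ 2 * Real.sqrt (Real.pi * s)) *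
        (Real.exp (β * x ^ 2) * Real.exp (-y ^ 2 / (4 * s))) := by ring
    _ = A * Real.exp (-x ^ 2 / (2 * s)) := by rw [hconst, hexp]
end
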